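/- arXiv:2109.05089 — 3 statements merged into one kernel-verified Lean document; each statement's English description precedes it below -/
import Mathlib

section
/- Let n ≥ 1, let Q be an n×n integer matrix whose determinant is a unit in ℤ (i.e., det Q = ±1), and let D be a symmetric n×n integer matrix all of whose diagonal entries are even. Then the symmetric 2n×2n integer block matrix M = [[0, Q], [Qᵀ, D]] is congruent over ℤ to the direct sum of n copies of the hyperbolic plane H; that is, there exists a 2n×2n integer matrix P with det P = ±1 such that Pᵀ M P equals the block-diagonal matrix with n diagonal blocks each equal to [[0,1],[1,0]]. -/
open Matrix

/-- The hyperbolic plane `H = [[0,1],[1,0]]` over `ℤ`. -/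
def hyperbolicPlane : Matrix (Fin 2) (Fin 2) ℤ := !![0, 1; 1, 0]

def hypIdx (n : ℕ) : (Fin n ⊕ Fin n) ≃ (Fin 2 × Fin n) where
  toFun x := Sum.elim (fun i => (0, i)) (fun i => (1, i)) x
  invFun p := if p.1 = 0 then Sum.inl p.2 else Sum.inr p.2
  left_inv x := by cases x <;> simp
  right_inv p := by
    rcases p with ⟨a, i⟩
    fin_cases a <;> simp

/-- Let `n ≥ 1`, let `Q` be an `n×n` integer matrix with `det Q = ±1`, and let `D` be a
symmetric `n×n` integer matrix with even diagonal entries.  Then the symmetric block matrix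
`M = [[0, Q], [Qᵀ, D]]` is congruent over `ℤ` to the direct sum of `n` copies of the
hyperbolic plane: after identifying the index types by a bijection `e`, there is an integer
matrix `P` with `det P = ±1` such that `Pᵀ M P` is the block-diagonal matrix with `n`
diagonal blocks `[[0,1],[1,0]]`. -/
theorem block_with_unimodular_offdiag_is_hyperbolic
    (n : ℕ) (hn : 1 ≤ n) (Q D : Matrix (Fin n) (Fin n) ℤ)
    (hQ : Q.det = 1 ∨ Q.det = -1) (hD : D.IsSymm) (hDdiag : ∀ i, Even (D i i)) :
    ∃ (e : (Fin n ⊕ Fin n) ≃ (Fin 2 × Fin n))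
      (P : Matrix (Fin 2 × Fin n) (Fin 2 × Fin n) ℤ),
      (P.det = 1 ∨ P.det = -1) ∧
      Pᵀ * (Matrix.reindex e e (Matrix.fromBlocks 0 Q Qᵀ D)) * P =
        Matrix.blockDiagonal (fun _ : Fin n => hyperbolicPlane) := by
  classical
  have hu : IsUnit Q.det := by rcases hQ with h | h <;> simp [h]
  have huT : IsUnit Qᵀ.det := by rwa [Matrix.det_transpose]
  set S : Matrix (Fin n) (Fin n) ℤ :=
    Matrix.of (fun i j => if i < j then D i j else if i = j then D i i / 2 else 0) with hSdef
  have hSsum : S + Sᵀ = D := by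
    ext i j
    rcases lt_trichotomy i j with h | h | h
    · simp [hSdef, h, h.not_gt, h.ne, h.ne']
    · subst h
      obtain ⟨r, hr⟩ := hDdiag i
      simp only [hSdef, Matrix.add_apply, Matrix.transpose_apply, Matrix.of_apply,
        lt_irrefl, if_false, if_pos rfl, if_true, hr]
      omega
    · have hsym : D i j = D j i := hD.apply j i
      simp [hSdef, h, h.not_gt, h.ne, h.ne', hsym]
  set X : Matrix (Fin n) (Fin n) ℤ := Qᵀ⁻¹ with hX
  set Y : Matrix (Fin n) (Fin n) ℤ := -(Qᵀ⁻¹ * S) with hY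
  set P' : Matrix (Fin n ⊕ Fin n) (Fin n ⊕ Fin n) ℤ := Matrix.fromBlocks X Y 0 1 with hP'
  have key : P'ᵀ * Matrix.fromBlocks 0 Q Qᵀ D * P' =
      Matrix.fromBlocks (0 : Matrix (Fin n) (Fin n) ℤ) 1 1 0 := by
    have h1 : Qᵀ * X = 1 := Matrix.mul_nonsing_inv _ huT
    have h2 : Xᵀ * Q = 1 := by
      rw [hX, Matrix.transpose_nonsing_inv, Matrix.transpose_transpose,
        Matrix.nonsing_inv_mul _ hu]
    have h3 : Qᵀ * Y = -S := by
      rw [hY, Matrix.mul_neg, ← Matrix.mul_assoc, Matrix.mul_nonsing_inv _ huT, Matrix.one_mul]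
    have h4 : Yᵀ * Q = -Sᵀ := by
      rw [hY, Matrix.transpose_neg, Matrix.transpose_mul, Matrix.transpose_nonsing_inv,
        Matrix.transpose_transpose, Matrix.neg_mul, Matrix.mul_assoc,
        Matrix.nonsing_inv_mul _ hu, Matrix.mul_one]
    rw [hP', Matrix.fromBlocks_transpose, Matrix.fromBlocks_multiply,
      Matrix.fromBlocks_multiply]
    simp only [Matrix.mul_zero, Matrix.zero_mul, Matrix.mul_one, Matrix.one_mul,
      add_zero, zero_add, Matrix.transpose_zero, Matrix.transpose_one,
      h1, h2, h3, h4]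
    have : -S + (-Sᵀ + D) = 0 := by
      rw [← hSsum]; abel
    rw [this]
  refine ⟨hypIdx n, Matrix.reindex (hypIdx n) (hypIdx n) P', ?_, ?_⟩
  · rw [Matrix.det_reindex_self, hP', Matrix.det_fromBlocks_zero₂₁, Matrix.det_one, mul_one,
      hX, Matrix.det_nonsing_inv, Matrix.det_transpose]
    rcases hQ with h | h
    · left; simp [h]
    · right
      rw [h]
      have hc := Ring.mul_inverse_cancel (-1 : ℤ) (by norm_num)
      linarith
  · have hmul : ∀ (A B : Matrix (Fin n ⊕ Fin n) (Fin n ⊕ Fin n) ℤ),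
        Matrix.reindex (hypIdx n) (hypIdx n) A * Matrix.reindex (hypIdx n) (hypIdx n) B =
        Matrix.reindex (hypIdx n) (hypIdx n) (A * B) := by
      intro A B
      simp [Matrix.reindex_apply, Matrix.submatrix_mul_equiv]
    rw [show (Matrix.reindex (hypIdx n) (hypIdx n) P')ᵀ =
        Matrix.reindex (hypIdx n) (hypIdx n) P'ᵀ from Matrix.transpose_reindex _ _ _,
      hmul, hmul, key]
    ext ⟨a, i⟩ ⟨b, j⟩
    fin_cases a <;> fin_cases b <;>
      simp [Matrix.reindex_apply, Matrix.submatrix_apply, hypIdx, Matrix.blockDiagonal_apply,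
        hyperbolicPlane, Matrix.one_apply, eq_comm]
end

section
/- Let r ≥ 1 and let θ be a 2r×2r integer matrix which, written in four r×r blocks, has the form [[0, A], [B, C]], where A is upper triangular with all diagonal entries equal to 1, B is strictly lower triangular, and C is an arbitrary r×r integer matrix. Then the symmetric matrix θ + θᵀ is congruent over ℤ to the direct sum of r copies of the hyperbolic plane H = [[0,1],[1,0]]: there exists a 2r×2r integer matrix P with det P = ±1 such that Pᵀ (θ + θᵀ) P is block-diagonal with r diagonal blocks [[0,1],[1,0]]. -/
open Matrix

/-- The obvious bijection `Fin r ⊕ Fin r ≃ Fin 2 × Fin r`. -/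
def sumToProdEquiv (r : ℕ) : (Fin r ⊕ Fin r) ≃ (Fin 2 × Fin r) where
  toFun x := Sum.elim (fun a => ((0 : Fin 2), a)) (fun a => ((1 : Fin 2), a)) x
  invFun p := if p.1 = 0 then Sum.inl p.2 else Sum.inr p.2
  left_inv x := by cases x <;> simp
  right_inv p := by
    obtain ⟨i, a⟩ := p
    fin_cases i <;> simp

/-- Key algebraic identity: congruence by `[[1, -E],[0, S⁻¹]]` kills the lower-right block. -/
theorem br_identity {r : ℕ} (S C : Matrix (Fin r) (Fin r) ℤ)
    (h1 : S * S⁻¹ = 1) (htr : S⁻¹ᵀ * Sᵀ = 1) :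
    S⁻¹ᵀ * Sᵀ * -(S⁻¹ᵀ * C * S⁻¹) +
      ((-(S⁻¹ᵀ * C * S⁻¹))ᵀ * S + S⁻¹ᵀ * (C + Cᵀ)) * S⁻¹ = 0 := by
  have htr' : ∀ X : Matrix (Fin r) (Fin r) ℤ, S⁻¹ᵀ * (Sᵀ * X) = X := by
    intro X; rw [← Matrix.mul_assoc, htr, one_mul]
  simp only [Matrix.mul_assoc, Matrix.add_mul, Matrix.mul_add, Matrix.neg_mul,
    Matrix.mul_neg, Matrix.transpose_mul, Matrix.transpose_neg,
    Matrix.transpose_transpose, h1, Matrix.mul_one, htr']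
  abel

/-- Let `r ≥ 1` and let `θ` be a `2r×2r` integer matrix of block form `[[0, A], [B, C]]`
with `A` upper triangular with all diagonal entries `1`, `B` strictly lower triangular and
`C` arbitrary.  Then `θ + θᵀ` is congruent over `ℤ` to the direct sum of `r` copies of the
hyperbolic plane `[[0,1],[1,0]]`: after identifying the index types by a bijection `e`,
there is an integer matrix `P` with `det P = ±1` conjugating `θ + θᵀ` to the block-diagonal
matrix with `r` hyperbolic blocks. -/
theorem seifert_block_form_symmetrization_hyperbolic
    (r : ℕ) (hr : 1 ≤ r) (A B C : Matrix (Fin r) (Fin r) ℤ)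
    (hA : ∀ i j : Fin r, j < i → A i j = 0) (hAdiag : ∀ i, A i i = 1)
    (hB : ∀ i j : Fin r, i ≤ j → B i j = 0) :
    ∃ (e : (Fin r ⊕ Fin r) ≃ (Fin 2 × Fin r))
      (P : Matrix (Fin 2 × Fin r) (Fin 2 × Fin r) ℤ),
      (P.det = 1 ∨ P.det = -1) ∧
      Pᵀ * (Matrix.reindex e e
          (Matrix.fromBlocks 0 A B C + (Matrix.fromBlocks 0 A B C)ᵀ)) * P =
        Matrix.blockDiagonal (fun _ : Fin r => hyperbolicPlane) := by
  set S : Matrix (Fin r) (Fin r) ℤ := A + Bᵀ with hSdef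
  have hdet : S.det = 1 := by
    have ht : S.BlockTriangular id := by
      intro i j h
      have h' : (j : Fin r) < i := h
      simp [hSdef, Matrix.add_apply, Matrix.transpose_apply,
        hA i j h', hB j i (le_of_lt h')]
    rw [Matrix.det_of_upperTriangular ht]
    have hd : ∀ i, S i i = 1 := by
      intro i
      simp [hSdef, Matrix.add_apply, Matrix.transpose_apply, hAdiag i, hB i i le_rfl]
    simp [hd]
  have hN : Matrix.fromBlocks 0 A B C + (Matrix.fromBlocks 0 A B C)ᵀ
      = Matrix.fromBlocks 0 S Sᵀ (C + Cᵀ) := by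
    rw [Matrix.fromBlocks_transpose, Matrix.fromBlocks_add, hSdef]
    congr 1
    all_goals simp [add_comm]
  clear_value S
  clear hSdef hA hAdiag hB
  have hu : IsUnit S.det := by rw [hdet]; exact isUnit_one
  have h1 : S * S⁻¹ = 1 := Matrix.mul_nonsing_inv S hu
  have h2 : S⁻¹ * S = 1 := Matrix.nonsing_inv_mul S hu
  have htr : S⁻¹ᵀ * Sᵀ = 1 := by
    rw [← Matrix.transpose_mul, h1, Matrix.transpose_one]
  set E : Matrix (Fin r) (Fin r) ℤ := S⁻¹ᵀ * C * S⁻¹ with hEdef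
  have key : (Matrix.fromBlocks (1 : Matrix (Fin r) (Fin r) ℤ) (-E) 0 S⁻¹ : Matrix (Fin r ⊕ Fin r) (Fin r ⊕ Fin r) ℤ)ᵀ *
      Matrix.fromBlocks 0 S Sᵀ (C + Cᵀ) * Matrix.fromBlocks (1 : Matrix (Fin r) (Fin r) ℤ) (-E) 0 S⁻¹
      = Matrix.fromBlocks (0 : Matrix (Fin r) (Fin r) ℤ) 1 1 0 := by
    rw [Matrix.fromBlocks_transpose, Matrix.fromBlocks_multiply, Matrix.fromBlocks_multiply,
      Matrix.fromBlocks_inj]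
    refine ⟨by simp, by simp [h1], by simp [htr], ?_⟩
    rw [hEdef]
    have := br_identity S C h1 htr
    simpa using this
  -- now transport along the equivalence
  refine ⟨sumToProdEquiv r,
    Matrix.reindex (sumToProdEquiv r) (sumToProdEquiv r) (Matrix.fromBlocks (1 : Matrix (Fin r) (Fin r) ℤ) (-E) 0 S⁻¹),
    Or.inl ?_, ?_⟩
  · rw [Matrix.det_reindex_self, Matrix.det_fromBlocks_zero₂₁, Matrix.det_one, one_mul,
      Matrix.det_nonsing_inv, hdet]
    simp
  · rw [hN]
    have hmul : ∀ (M₁ M₂ : Matrix (Fin r ⊕ Fin r) (Fin r ⊕ Fin r) ℤ),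
        (Matrix.reindex (sumToProdEquiv r) (sumToProdEquiv r) M₁) *
        (Matrix.reindex (sumToProdEquiv r) (sumToProdEquiv r) M₂) =
        Matrix.reindex (sumToProdEquiv r) (sumToProdEquiv r) (M₁ * M₂) := by
      intro M₁ M₂
      simp [Matrix.reindex_apply, Matrix.submatrix_mul_equiv]
    have htp : (Matrix.reindex (sumToProdEquiv r) (sumToProdEquiv r)
        (Matrix.fromBlocks (1 : Matrix (Fin r) (Fin r) ℤ) (-E) 0 S⁻¹))ᵀ =
        Matrix.reindex (sumToProdEquiv r) (sumToProdEquiv r)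
        ((Matrix.fromBlocks (1 : Matrix (Fin r) (Fin r) ℤ) (-E) 0 S⁻¹)ᵀ) := by
      simp [Matrix.reindex_apply, Matrix.transpose_submatrix]
    rw [htp, hmul, hmul, key]
    ext ⟨i, k⟩ ⟨j, l⟩
    fin_cases i <;> fin_cases j <;>
      simp [sumToProdEquiv, Matrix.reindex_apply, Matrix.submatrix_apply,
        Matrix.blockDiagonal_apply, hyperbolicPlane, Matrix.fromBlocks,
        Matrix.one_apply, eq_comm]
end

section
/- Let r, k ≥ 1. Let θ be a 2r×2r integer matrix which, in r×r blocks, has the form [[0, A], [B, C]] with A upper triangular with all diagonal entries 1, B strictly lower triangular, and C arbitrary. Let Λ_k be the k×k integer matrix with 1 on the diagonal, -1 on the superdiagonal, and 0 elsewhere, and let Θ = θ ⊗ Λ_k be the Kronecker product, a square integer matrix of size 2rk (indexed by Fin (2r) × Fin k, reindexed by any bijection with Fin (2rk)). Then Θ + Θᵀ is congruent over ℤ to the direct sum of rk copies of the hyperbolic plane H = [[0,1],[1,0]]: there exists an integer matrix P of size 2rk with det P = ±1 such that Pᵀ (Θ + Θᵀ) P is block-diagonal with rk diagonal blocks [[0,1],[1,0]].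 -/
open Matrix Kronecker

/-- The `k×k` bidiagonal integer matrix `Λ_k` with `1` on the diagonal and `-1` on the
superdiagonal. -/
def LambdaMat (k : ℕ) : Matrix (Fin k) (Fin k) ℤ :=
  fun a b => if a = b then 1 else if (a : ℕ) + 1 = (b : ℕ) then -1 else 0

namespace HypAux

variable {r k : ℕ}

/-- The pairing between the two halves of the lattice. -/
def Nmat (A B : Matrix (Fin r) (Fin r) ℤ) (k : ℕ) :
    Matrix (Fin r × Fin k) (Fin r × Fin k) ℤ :=
  fun x y => A x.1 y.1 * LambdaMat k x.2 y.2 + B y.1 x.1 * LambdaMat k y.2 x.2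

/-- The self-pairing of the second half of the lattice. -/
def Dmat (C : Matrix (Fin r) (Fin r) ℤ) (k : ℕ) :
    Matrix (Fin r × Fin k) (Fin r × Fin k) ℤ :=
  fun x y => C x.1 y.1 * LambdaMat k x.2 y.2 + C y.1 x.1 * LambdaMat k y.2 x.2

/-- Half of `Dmat`. -/
def Ymat (C : Matrix (Fin r) (Fin r) ℤ) (k : ℕ) :
    Matrix (Fin r × Fin k) (Fin r × Fin k) ℤ :=
  fun x y => if (x.1 : ℕ) * k + (x.2 : ℕ) < (y.1 : ℕ) * k + (y.2 : ℕ) then Dmat C k x y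
    else if x = y then C x.1 x.1 else 0

/-- The equivalence `ι ⊕ ι ≃ Fin 2 × ι`. -/
def sumEquiv (ι : Type*) : ι ⊕ ι ≃ Fin 2 × ι where
  toFun x := Sum.elim (fun a => ((0 : Fin 2), a)) (fun a => ((1 : Fin 2), a)) x
  invFun p := if p.1 = 0 then Sum.inl p.2 else Sum.inr p.2
  left_inv x := by cases x <;> simp
  right_inv p := by
    obtain ⟨s, a⟩ := p
    fin_cases s <;> simp

lemma LambdaMat_diag (k : ℕ) (a : Fin k) : LambdaMat k a a = 1 := by simp [LambdaMat]

lemma LambdaMat_lower {k : ℕ} {a b : Fin k} (h : b < a) : LambdaMat k a b = 0 := by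
  have h1 : a ≠ b := Fin.ne_of_gt h
  have h2 : (a : ℕ) + 1 ≠ (b : ℕ) := by omega
  simp [LambdaMat, h1, h2]

lemma Ymat_add_transpose (C : Matrix (Fin r) (Fin r) ℤ) (k : ℕ) (hk : 1 ≤ k) :
    Ymat C k + (Ymat C k)ᵀ = Dmat C k := by
  ext x y
  simp only [Matrix.add_apply, Matrix.transpose_apply, Ymat]
  rcases lt_trichotomy ((x.1 : ℕ) * k + (x.2 : ℕ)) ((y.1 : ℕ) * k + (y.2 : ℕ)) with h | h | h
  · have hxy : y ≠ x := by
      rintro rfl; exact lt_irrefl _ h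
    simp [h, not_lt.mpr h.le, hxy]
  · have hxy : x = y := by
      have hx2 := x.2.2; have hy2 := y.2.2
      have h1 : (x.1 : ℕ) = (y.1 : ℕ) := by nlinarith [x.1.2, y.1.2]
      have hkk : (x.1 : ℕ) * k = (y.1 : ℕ) * k := by rw [h1]
      have h2 : (x.2 : ℕ) = (y.2 : ℕ) := by omega
      exact Prod.ext (Fin.ext h1) (Fin.ext h2)
    subst hxy
    simp only [lt_irrefl, if_false, if_true, if_pos rfl, Dmat, LambdaMat_diag, eq_self_iff_true]
    ring
  · have hxy : x ≠ y := by
      rintro rfl; exact lt_irrefl _ h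
    have hsymm : Dmat C k y x = Dmat C k x y := by simp [Dmat]; ring
    simp [h, not_lt.mpr h.le, hxy, hxy.symm, hsymm]

lemma Nmat_det (A B : Matrix (Fin r) (Fin r) ℤ)
    (hA : ∀ i j : Fin r, j < i → A i j = 0) (hAdiag : ∀ i, A i i = 1)
    (hB : ∀ i j : Fin r, i ≤ j → B i j = 0) (k : ℕ) :
    (Nmat A B k).det = 1 := by
  have hdet : (Nmat A B k).det =
      ((Nmat A B k).submatrix (finProdFinEquiv (m := r) (n := k)).symm
        finProdFinEquiv.symm).det :=
    (Matrix.det_submatrix_equiv_self finProdFinEquiv.symm _).symm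
  rw [hdet]
  rw [Matrix.det_of_upperTriangular]
  · apply Finset.prod_eq_one
    intro p _
    simp only [Matrix.submatrix_apply, Nmat]
    rw [hAdiag, LambdaMat_diag, hB _ _ le_rfl]
    ring
  · intro p q hpq
    simp only [Matrix.submatrix_apply, Nmat]
    set x := finProdFinEquiv.symm p with hx
    set y := finProdFinEquiv.symm q with hy
    have hp : (y.2 : ℕ) + k * (y.1 : ℕ) < (x.2 : ℕ) + k * (x.1 : ℕ) := by
      have h1 : finProdFinEquiv x = p := by rw [hx]; exact finProdFinEquiv.apply_symm_apply p
      have h2 : finProdFinEquiv y = q := by rw [hy]; exact finProdFinEquiv.apply_symm_apply q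
      have e1 : (p : ℕ) = (x.2 : ℕ) + k * (x.1 : ℕ) := by
        rw [← h1]; simp only [finProdFinEquiv_apply_val]
      have e2 : (q : ℕ) = (y.2 : ℕ) + k * (y.1 : ℕ) := by
        rw [← h2]; simp only [finProdFinEquiv_apply_val]
      have := hpq
      simp only [id] at this
      omega
    have hx2 := x.2.2
    have hy2 := y.2.2
    rcases lt_or_ge (y.1 : ℕ) (x.1 : ℕ) with h | h
    · rw [hA _ _ h, hB _ _ (le_of_lt h), zero_mul, zero_mul, add_zero]
    · have h1 : (y.1 : ℕ) = (x.1 : ℕ) := by nlinarith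
      have h1' : y.1 = x.1 := Fin.ext h1
      have hkk : k * (y.1 : ℕ) = k * (x.1 : ℕ) := by rw [h1]
      have h2 : (y.2 : ℕ) < (x.2 : ℕ) := by omega
      rw [h1', hB _ _ le_rfl, LambdaMat_lower h2, mul_zero, zero_mul, add_zero]

end HypAux

/-- Let `r, k ≥ 1`, let `θ` be the `2r×2r` integer matrix of block form `[[0, A], [B, C]]`
with `A` upper triangular with all diagonal entries `1`, `B` strictly lower triangular and
`C` arbitrary, and let `Θ = θ ⊗ Λ_k` be the Kronecker product (a square matrix of size
`2rk`).  Then `Θ + Θᵀ` is congruent over `ℤ` to the direct sum of `rk` copies of the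
hyperbolic plane `[[0,1],[1,0]]`: after identifying the index types by a bijection `e`
(congruence over `ℤ` is invariant under such a reindexing), there is an integer matrix `P`
with `det P = ±1` conjugating `Θ + Θᵀ` to the block-diagonal matrix with `rk` hyperbolic
blocks. -/
theorem tensored_seifert_form_symmetrization_hyperbolic
    (r k : ℕ) (hr : 1 ≤ r) (hk : 1 ≤ k) (A B C : Matrix (Fin r) (Fin r) ℤ)
    (hA : ∀ i j : Fin r, j < i → A i j = 0) (hAdiag : ∀ i, A i i = 1)
    (hB : ∀ i j : Fin r, i ≤ j → B i j = 0) :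
    ∃ (e : ((Fin r ⊕ Fin r) × Fin k) ≃ (Fin 2 × (Fin r × Fin k)))
      (P : Matrix (Fin 2 × (Fin r × Fin k)) (Fin 2 × (Fin r × Fin k)) ℤ),
      (P.det = 1 ∨ P.det = -1) ∧
      Pᵀ * (Matrix.reindex e e
          ((Matrix.fromBlocks 0 A B C ⊗ₖ LambdaMat k) +
            (Matrix.fromBlocks 0 A B C ⊗ₖ LambdaMat k)ᵀ)) * P =
        Matrix.blockDiagonal (fun _ : Fin r × Fin k => hyperbolicPlane) := by
  classical
  set ι := Fin r × Fin k
  set N := HypAux.Nmat A B k with hN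
  set D := HypAux.Dmat C k with hD
  set Y := HypAux.Ymat C k with hY
  have hdetN : N.det = 1 := HypAux.Nmat_det A B hA hAdiag hB k
  have hUnit : IsUnit N.det := by rw [hdetN]; exact isUnit_one
  have hUnitT : IsUnit Nᵀ.det := by rw [Matrix.det_transpose, hdetN]; exact isUnit_one
  -- the two equivalences
  set e₀ : ((Fin r ⊕ Fin r) × Fin k) ≃ (ι ⊕ ι) :=
    Equiv.sumProdDistrib (Fin r) (Fin r) (Fin k) with he₀
  set e₁ : (ι ⊕ ι) ≃ (Fin 2 × ι) := HypAux.sumEquiv ι with he₁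
  refine ⟨e₀.trans e₁, ?_⟩
  -- the symmetrized matrix in sum coordinates
  set M := (Matrix.fromBlocks 0 A B C ⊗ₖ LambdaMat k) +
      (Matrix.fromBlocks 0 A B C ⊗ₖ LambdaMat k)ᵀ with hM
  have hM0 : Matrix.reindex e₀ e₀ M = Matrix.fromBlocks 0 N Nᵀ D := by
    ext u v
    rcases u with u | u <;> rcases v with v | v <;>
      simp [hM, hN, hD, HypAux.Nmat, HypAux.Dmat, Matrix.kroneckerMap_apply, e₀,
        Equiv.sumProdDistrib] <;> ring
  -- the transforming matrix in sum coordinates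
  set P₀ : Matrix (ι ⊕ ι) (ι ⊕ ι) ℤ :=
    Matrix.fromBlocks (N⁻¹)ᵀ (-((N⁻¹)ᵀ * Y)) 0 1 with hP₀
  refine ⟨Matrix.reindex e₁ e₁ P₀, ?_, ?_⟩
  · left
    rw [Matrix.det_reindex_self, hP₀, Matrix.det_fromBlocks_zero₂₁,
      Matrix.det_transpose, Matrix.det_nonsing_inv, hdetN, Matrix.det_one]
    simp
  · have key : P₀ᵀ * (Matrix.fromBlocks 0 N Nᵀ D) * P₀ =
        Matrix.fromBlocks 0 1 1 0 := by
      have hNinv : N⁻¹ * N = 1 := Matrix.nonsing_inv_mul N hUnit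
      have hNTinv : Nᵀ * (N⁻¹)ᵀ = 1 := by
        rw [Matrix.transpose_nonsing_inv]
        exact Matrix.mul_nonsing_inv Nᵀ hUnitT
      have hYD : Y + Yᵀ = D := HypAux.Ymat_add_transpose C k hk
      rw [hP₀, Matrix.fromBlocks_transpose, Matrix.fromBlocks_multiply,
        Matrix.fromBlocks_multiply, Matrix.fromBlocks_inj]
      refine ⟨by simp, by simp [Matrix.mul_assoc, hNinv], by simp [hNTinv], ?_⟩
      simp only [Matrix.transpose_neg, Matrix.transpose_mul, Matrix.transpose_transpose,
        Matrix.transpose_zero, Matrix.transpose_one, Matrix.mul_zero, Matrix.zero_mul,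
        Matrix.one_mul, Matrix.mul_one, Matrix.neg_mul, Matrix.mul_neg, add_zero, zero_add]
      rw [show Nᵀ * ((N⁻¹)ᵀ * Y) = Y by rw [← Matrix.mul_assoc, hNTinv, Matrix.one_mul]]
      rw [show Yᵀ * N⁻¹ * N = Yᵀ by rw [Matrix.mul_assoc, hNinv, Matrix.mul_one]]
      rw [← hYD]
      abel
    calc (Matrix.reindex e₁ e₁ P₀)ᵀ *
          (Matrix.reindex (e₀.trans e₁) (e₀.trans e₁) M) * Matrix.reindex e₁ e₁ P₀
        = Matrix.reindex e₁ e₁ (P₀ᵀ * (Matrix.fromBlocks 0 N Nᵀ D) * P₀) := by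
          rw [← hM0]
          rw [show Matrix.reindex (e₀.trans e₁) (e₀.trans e₁) M =
            Matrix.reindex e₁ e₁ (Matrix.reindex e₀ e₀ M) by
              simp [Matrix.reindex, Matrix.submatrix_submatrix]]
          simp only [Matrix.reindex_apply, Matrix.transpose_submatrix,
            Matrix.submatrix_mul_equiv]
      _ = Matrix.blockDiagonal (fun _ : ι => hyperbolicPlane) := by
          rw [key]
          ext ⟨s, x⟩ ⟨t, y⟩
          fin_cases s <;> fin_cases t <;>
            simp [Matrix.blockDiagonal_apply, hyperbolicPlane, e₁, HypAux.sumEquiv,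
              Matrix.one_apply, eq_comm]
end
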